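/- arXiv:1805.07051 — 3 statements merged into one kernel-verified Lean document; each statement's English description precedes it below -/
import Mathlib

section
/- For any λ > 0 and any real z, the integral over s ∈ (0,∞) of (1/√(2πs)) · exp(−z²/(2s)) · (λ²/2) · exp(−λ²s/2) ds equals (λ/2) · exp(−λ|z|). That is, the Laplace density is a scale mixture of centered Gaussian densities with exponential mixing distribution on the variance. -/
/-!
Substituting `s = x²` and completing the square, `z² / x² + λ² x² = (λ x - |z| / x)² + 2 λ |z|`,
turns the integral into `λ² e^{-λ|z|} / √(2π) · ∫₀^∞ exp (-(λ x - |z| / x)² / 2) dx`.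
The last integral is `√(2π) / (2λ)` by the Cauchy–Schlömilch transformation: for even integrable
`f`, `∫₀^∞ f (b x - c / x) dx = (2b)⁻¹ ∫ f`. Indeed `x ↦ b x - c / x` maps `(0, ∞)` onto `ℝ` with
derivative `b + c / x²`, and the involution `x ↦ c / (b x)`, which flips the sign of `b x - c / x`,
shows that the `c / x²` part of the Jacobian contributes as much as the `b` part.
-/

open MeasureTheory Real Set

section CauchySchlomilch

variable {b c : ℝ}

lemma hasDerivAt_mul_sub_div {x : ℝ} (hx : x ≠ 0) :
    HasDerivAt (fun u => b * u - c / u) (b + c / x ^ 2) x := by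
  have h : HasDerivAt (fun u => b * u - c * u⁻¹) (b * 1 - c * -(x ^ 2)⁻¹) x :=
    ((hasDerivAt_id' x).const_mul b).sub ((hasDerivAt_inv hx).const_mul c)
  rw [show b + c / x ^ 2 = b * 1 - c * -(x ^ 2)⁻¹ by ring]
  simpa only [div_eq_mul_inv] using h

lemma strictMonoOn_mul_sub_div (hb : 0 < b) (hc : 0 ≤ c) :
    StrictMonoOn (fun u => b * u - c / u) (Ioi 0) := by
  intro x hx y _ hxy
  have : c / y ≤ c / x := div_le_div_of_nonneg_left hc hx hxy.le
  dsimp only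
  nlinarith

lemma image_mul_sub_div_Ioi (hb : 0 < b) (hc : 0 < c) :
    (fun u => b * u - c / u) '' Ioi 0 = univ := by
  refine eq_univ_of_forall fun v => ?_
  set r := √(v ^ 2 + 4 * b * c)
  have hr : r ^ 2 = v ^ 2 + 4 * b * c := sq_sqrt (by positivity)
  have hvr : |v| < r := by
    rw [← sqrt_sq_eq_abs]
    exact sqrt_lt_sqrt (sq_nonneg v) (by nlinarith)
  have hpos : 0 < v + r := by linarith [neg_abs_le v]
  -- the positive root of `b u² - v u - c = 0`
  refine ⟨(v + r) / (2 * b), div_pos hpos (by positivity), ?_⟩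
  field_simp
  nlinarith

lemma mul_sub_div_comp_div_mul (hb : b ≠ 0) (hc : c ≠ 0) {x : ℝ} (hx : x ≠ 0) :
    b * (c / (b * x)) - c / (c / (b * x)) = -(b * x - c / x) := by
  field_simp
  ring

lemma hasDerivAt_div_mul {x : ℝ} (hx : x ≠ 0) :
    HasDerivAt (fun u => c / (b * u)) (-(c / b) / x ^ 2) x := by
  have h := (hasDerivAt_inv hx).const_mul (c / b)
  rw [show -(c / b) / x ^ 2 = c / b * -(x ^ 2)⁻¹ by ring]
  simpa only [div_eq_mul_inv, mul_inv, mul_assoc] using h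

lemma integral_div_sq_mul_comp_mul_sub_div (hb : 0 < b) (hc : 0 < c) {f : ℝ → ℝ}
    (heven : Function.Even f) :
    ∫ x in Ioi 0, c / x ^ 2 * f (b * x - c / x) = b * ∫ x in Ioi 0, f (b * x - c / x) := by
  have hderiv : ∀ x ∈ Ioi (0 : ℝ),
      HasDerivWithinAt (fun u => c / (b * u)) (-(c / b) / x ^ 2) (Ioi 0) x :=
    fun x hx => (hasDerivAt_div_mul (ne_of_gt hx)).hasDerivWithinAt
  have hinj : InjOn (fun u => c / (b * u)) (Ioi 0) := by
    intro x hx y hy hxy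
    have hx : 0 < x := hx
    have hy : 0 < y := hy
    field_simp at hxy
    linarith
  have himage : (fun u => c / (b * u)) '' Ioi 0 = Ioi 0 := by
    ext y
    refine ⟨?_, fun hy => ⟨c / (b * y), by simp_all only [mem_Ioi]; positivity, ?_⟩⟩
    · rintro ⟨x, hx, rfl⟩
      simp_all only [mem_Ioi]
      positivity
    · field_simp
  have key := integral_image_eq_integral_abs_deriv_smul measurableSet_Ioi hderiv hinj
    (fun y => f (b * y - c / y))
  rw [himage] at key
  rw [key, ← integral_const_mul]
  refine setIntegral_congr_fun measurableSet_Ioi fun x hx => ?_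
  have hx : 0 < x := hx
  simp only [smul_eq_mul, mul_sub_div_comp_div_mul hb.ne' hc.ne' hx.ne', heven _]
  rw [abs_of_neg (by simp only [neg_div]; exact neg_neg_of_pos (by positivity))]
  field_simp

lemma integral_comp_mul_Ioi_of_even (hb : 0 < b) {f : ℝ → ℝ} (heven : Function.Even f) :
    ∫ x in Ioi 0, f (b * x) = (∫ v, f v) / (2 * b) := by
  have habs : (fun v => f |v|) = f := funext fun v => by
    rcases abs_choice v with h | h <;> rw [h]; exact heven v
  have hfull : ∫ v, f v = 2 * ∫ x in Ioi 0, f x := by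
    conv_lhs => rw [← habs]
    exact integral_comp_abs
  rw [integral_comp_mul_left_Ioi f 0 hb, mul_zero, hfull, smul_eq_mul]
  field_simp

lemma abs_deriv_smul_comp_mul_sub_div (hb : 0 < b) (hc : 0 ≤ c) (f : ℝ → ℝ) :
    ∀ x ∈ Ioi (0 : ℝ),
      |b + c / x ^ 2| • f (b * x - c / x) = (b + c / x ^ 2) * f (b * x - c / x) :=
  fun x hx => by rw [smul_eq_mul, abs_of_pos (by have : 0 < x := hx; positivity)]

lemma integral_deriv_mul_comp_mul_sub_div (hb : 0 < b) (hc : 0 < c) (f : ℝ → ℝ) :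
    ∫ x in Ioi 0, (b + c / x ^ 2) * f (b * x - c / x) = ∫ v, f v := by
  rw [eq_comm, ← setIntegral_univ, ← image_mul_sub_div_Ioi hb hc,
    integral_image_eq_integral_abs_deriv_smul measurableSet_Ioi
      (fun x hx => (hasDerivAt_mul_sub_div (ne_of_gt hx)).hasDerivWithinAt)
      (strictMonoOn_mul_sub_div hb hc.le).injOn]
  exact setIntegral_congr_fun measurableSet_Ioi (abs_deriv_smul_comp_mul_sub_div hb hc.le f)

lemma integrableOn_deriv_mul_comp_mul_sub_div (hb : 0 < b) (hc : 0 < c) {f : ℝ → ℝ}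
    (hf : Integrable f) :
    IntegrableOn (fun x => (b + c / x ^ 2) * f (b * x - c / x)) (Ioi 0) := by
  refine ((integrableOn_image_iff_integrableOn_abs_deriv_smul measurableSet_Ioi
    (fun x hx => (hasDerivAt_mul_sub_div (ne_of_gt hx)).hasDerivWithinAt)
    (strictMonoOn_mul_sub_div hb hc.le).injOn f).mp ?_).congr_fun
    (abs_deriv_smul_comp_mul_sub_div hb hc.le f) measurableSet_Ioi
  rw [image_mul_sub_div_Ioi hb hc]
  exact hf.integrableOn

lemma integrableOn_comp_mul_sub_div (hb : 0 < b) (hc : 0 < c) {f : ℝ → ℝ} (hf : Integrable f) :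
    IntegrableOn (fun x => f (b * x - c / x)) (Ioi 0) := by
  have hcont : ContinuousOn (fun x : ℝ => (b + c / x ^ 2)⁻¹) (Ioi 0) := fun x hx => by
    have : 0 < x := hx
    exact (by fun_prop (disch := positivity) : ContinuousAt _ x).continuousWithinAt
  have hbound : ∀ᵐ x ∂volume.restrict (Ioi 0), ‖(b + c / x ^ 2)⁻¹‖ ≤ b⁻¹ := by
    refine ae_restrict_of_forall_mem measurableSet_Ioi fun x hx => ?_
    have : 0 < x := hx
    rw [norm_inv, norm_of_nonneg (by positivity)]
    exact inv_anti₀ hb (le_add_of_nonneg_right (by positivity))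
  refine IntegrableOn.congr_fun ((integrableOn_deriv_mul_comp_mul_sub_div hb hc hf).bdd_mul
    (hcont.aestronglyMeasurable measurableSet_Ioi) hbound) (fun x hx => ?_) measurableSet_Ioi
  have : 0 < x := hx
  field_simp

theorem integral_comp_mul_sub_div_Ioi (hb : 0 < b) (hc : 0 ≤ c) {f : ℝ → ℝ}
    (hf : Integrable f) (heven : Function.Even f) :
    ∫ x in Ioi 0, f (b * x - c / x) = (∫ v, f v) / (2 * b) := by
  rcases hc.eq_or_lt with rfl | hc
  · simpa only [zero_div, sub_zero] using integral_comp_mul_Ioi_of_even hb heven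
  have hI := integrableOn_comp_mul_sub_div hb hc hf
  have hJ := integrableOn_deriv_mul_comp_mul_sub_div hb hc hf
  have hrest : IntegrableOn (fun x => c / x ^ 2 * f (b * x - c / x)) (Ioi 0) :=
    (hJ.sub (hI.const_mul b)).congr_fun (fun x _ => by simp only [Pi.sub_apply]; ring)
      measurableSet_Ioi
  have hsplit : ∫ x in Ioi 0, (b + c / x ^ 2) * f (b * x - c / x) =
      b * (∫ x in Ioi 0, f (b * x - c / x)) + ∫ x in Ioi 0, c / x ^ 2 * f (b * x - c / x) := by
    rw [← integral_const_mul, ← integral_add (hI.const_mul b) hrest]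
    simp only [add_mul]
  rw [← integral_deriv_mul_comp_mul_sub_div hb hc, hsplit,
    integral_div_sq_mul_comp_mul_sub_div hb hc heven, eq_div_iff (by positivity)]
  ring

end CauchySchlomilch

lemma integral_gaussian_comp_mul_sub_div_Ioi {b c : ℝ} (hb : 0 < b) (hc : 0 ≤ c) :
    ∫ x in Ioi 0, exp (-(1 / 2) * (b * x - c / x) ^ 2) = √(2 * π) / (2 * b) := by
  rw [integral_comp_mul_sub_div_Ioi hb hc (integrable_exp_neg_mul_sq (by norm_num))
    (fun v => by simp only [neg_sq]), integral_gaussian, show π / (1 / 2) = 2 * π by ring]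

lemma exp_neg_sq_div_mul_exp_neg_sq (lam z : ℝ) {x : ℝ} (hx : x ≠ 0) :
    exp (-(z ^ 2) / (2 * x ^ 2)) * exp (-(lam ^ 2) * x ^ 2 / 2) =
      exp (-(lam * |z|)) * exp (-(1 / 2) * (lam * x - |z| / x) ^ 2) := by
  rw [← exp_add, ← exp_add, ← sq_abs z]
  congr 1
  field_simp
  ring

/-- The Laplace density as a scale mixture of centered Gaussians with
exponential mixing on the variance. -/
theorem laplace_scale_mixture (lam z : ℝ) (hlam : 0 < lam) :
    ∫ s in Set.Ioi (0 : ℝ),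
      (1 / Real.sqrt (2 * Real.pi * s)) * Real.exp (-(z ^ 2) / (2 * s)) *
        ((lam ^ 2 / 2) * Real.exp (-(lam ^ 2) * s / 2))
      = (lam / 2) * Real.exp (-(lam * |z|)) := by
  have hsubst : ∀ x ∈ Ioi (0 : ℝ),
      ((2 : ℝ) * x ^ ((2 : ℝ) - 1)) • ((1 / √(2 * π * x ^ (2 : ℝ))) *
        exp (-(z ^ 2) / (2 * x ^ (2 : ℝ))) *
          ((lam ^ 2 / 2) * exp (-(lam ^ 2) * x ^ (2 : ℝ) / 2))) =
      lam ^ 2 / √(2 * π) * exp (-(lam * |z|)) * exp (-(1 / 2) * (lam * x - |z| / x) ^ 2) := by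
    intro x hx
    have hx : 0 < x := hx
    rw [mul_assoc (lam ^ 2 / √(2 * π)), ← exp_neg_sq_div_mul_exp_neg_sq lam z hx.ne', rpow_two,
      smul_eq_mul, show (2 : ℝ) - 1 = 1 by norm_num, rpow_one, sqrt_mul (by positivity),
      sqrt_sq hx.le]
    field_simp
  rw [← integral_comp_rpow_Ioi_of_pos two_pos, setIntegral_congr_fun measurableSet_Ioi hsubst,
    integral_const_mul, integral_gaussian_comp_mul_sub_div_Ioi hlam (abs_nonneg z)]
  field_simp
end

section
/- For any λ > 0 and any vector z ∈ ℝ^p, the integral over s ∈ (0,∞) of (2πs)^{−p/2} · exp(−‖z‖₂²/(2s)) · (λ²/2)^{(p+1)/2} · s^{(p+1)/2 − 1} · exp(−λ²s/2) / Γ((p+1)/2) ds is proportional to exp(−λ‖z‖₂); more precisely it equals C_p · λ^p · exp(−λ‖z‖₂) for a constant C_p depending only on p. In particular the multivariate group-lasso prior on z is a scale mixture of isotropic Gaussians with a Gamma((p+1)/2, λ²/2) mixing distribution on the variance parameter. -/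
open MeasureTheory Real Set

/-!
With `a = ‖z‖² / 2` and `b = λ² / 2`, the integrand is a constant times `s^(-1/2) e^(-a/s - b s)`.
Substituting `s = t²` and completing the square turns this integral into
`2 e^(-2√(ab)) ∫₀^∞ e^(-(√b t - √a / t)²) dt`. The last integral is `√π / (2√b)` by the
Cauchy–Schlömilch substitution: for even integrable `f`, `∫₀^∞ f(βt - α/t) dt = (2β)⁻¹ ∫ f`,
because the inversion `t ↦ α / (β t)` shows that `∫₀^∞ f(βt - α/t) dt` also equals
`∫₀^∞ (α / (β t²)) f(βt - α/t) dt`, and the sum of the two integrals is, up to the factor `β`,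
the substitution `u = βt - α/t` of `∫ f`. Since `2√(ab) = λ‖z‖` and
`b^((p+1)/2) / √b = (λ / √2)^p`, the mixture is `C λ^p e^(-λ‖z‖)`.
-/

variable {E : Type*} [NormedAddCommGroup E] [NormedSpace ℝ E]

section Inversion

variable {c : ℝ}

lemma image_const_div_Ioi (hc : 0 < c) : (fun t => c / t) '' Ioi 0 = Ioi 0 := by
  refine Subset.antisymm (image_subset_iff.2 fun t ht => div_pos hc ht) fun u hu => ?_
  exact ⟨c / u, div_pos hc hu, div_div_cancel₀ hc.ne'⟩

lemma integral_comp_const_div_Ioi (hc : 0 < c) (g : ℝ → E) :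
    ∫ t in Ioi 0, (c / t ^ 2) • g (c / t) = ∫ t in Ioi 0, g t := by
  have hderiv : ∀ t ∈ Ioi (0 : ℝ), HasDerivWithinAt (fun t => c / t) (-(c / t ^ 2)) (Ioi 0) t :=
    fun t ht => by simpa [div_eq_mul_inv] using
      ((hasDerivAt_inv (ne_of_gt ht)).const_mul c).hasDerivWithinAt
  have hinj : InjOn (fun t => c / t) (Ioi 0) := fun s _ t _ h => by
    simpa [div_div_cancel₀ hc.ne'] using congrArg (c / ·) h
  conv_rhs => rw [← image_const_div_Ioi hc,
    integral_image_eq_integral_abs_deriv_smul measurableSet_Ioi hderiv hinj]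
  refine setIntegral_congr_fun measurableSet_Ioi fun t ht => ?_
  rw [abs_neg, abs_of_pos (div_pos hc (pow_pos ht 2))]

end Inversion

section CauchySchlomilch

variable {α β : ℝ}

lemma hasDerivAt_mul_sub_div_s1 {t : ℝ} (ht : t ≠ 0) :
    HasDerivAt (fun t => β * t - α / t) (β + α / t ^ 2) t := by
  simpa [div_eq_mul_inv] using
    ((hasDerivAt_id t).const_mul β).fun_sub ((hasDerivAt_inv ht).const_mul α)

lemma strictMonoOn_mul_sub_div_s1 (hα : 0 ≤ α) (hβ : 0 < β) :
    StrictMonoOn (fun t => β * t - α / t) (Ioi 0) := fun s hs t _ hst => by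
  have : α / t ≤ α / s := div_le_div_of_nonneg_left hα hs hst.le
  have : β * s < β * t := mul_lt_mul_of_pos_left hst hβ
  dsimp only
  linarith

lemma image_mul_sub_div_Ioi_s1 (hα : 0 < α) (hβ : 0 < β) :
    (fun t => β * t - α / t) '' Ioi 0 = univ := by
  refine eq_univ_of_forall fun u => ?_
  -- the positive root of `β t² - u t - α = 0`
  set D := √(u ^ 2 + 4 * α * β)
  have hD : D ^ 2 = u ^ 2 + 4 * α * β := sq_sqrt (by positivity)
  have hDu : |u| < D := by
    rw [← sqrt_sq_eq_abs]; exact sqrt_lt_sqrt (sq_nonneg u) (by linarith [mul_pos hα hβ])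
  have hpos : 0 < u + D := by linarith [neg_abs_le u]
  refine ⟨(u + D) / (2 * β), div_pos hpos (by positivity), ?_⟩
  field_simp
  linear_combination hD

lemma integral_eq_integral_Ioi_deriv_smul_comp_mul_sub_div (hα : 0 < α) (hβ : 0 < β)
    (f : ℝ → E) : ∫ u, f u = ∫ t in Ioi 0, (β + α / t ^ 2) • f (β * t - α / t) := by
  rw [← setIntegral_univ, ← image_mul_sub_div_Ioi_s1 hα hβ,
    integral_image_eq_integral_abs_deriv_smul measurableSet_Ioi
      (fun t ht => (hasDerivAt_mul_sub_div_s1 ht.out.ne').hasDerivWithinAt)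
      (strictMonoOn_mul_sub_div_s1 hα.le hβ).injOn]
  exact setIntegral_congr_fun measurableSet_Ioi fun t _ => by
    rw [abs_of_pos (by positivity : 0 < β + α / t ^ 2)]

lemma integrableOn_deriv_smul_comp_mul_sub_div_Ioi (hα : 0 < α) (hβ : 0 < β) {f : ℝ → E}
    (hf : Integrable f) :
    IntegrableOn (fun t => (β + α / t ^ 2) • f (β * t - α / t)) (Ioi 0) := by
  have := (integrableOn_image_iff_integrableOn_abs_deriv_smul measurableSet_Ioi
    (fun t ht => (hasDerivAt_mul_sub_div_s1 ht.out.ne').hasDerivWithinAt)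
    (strictMonoOn_mul_sub_div_s1 hα.le hβ).injOn f).1
    (by rw [image_mul_sub_div_Ioi_s1 hα hβ]; exact hf.integrableOn)
  exact this.congr_fun (fun t _ => by simp only [abs_of_pos (by positivity : 0 < β + α / t ^ 2)])
    measurableSet_Ioi

lemma integrableOn_comp_mul_sub_div_Ioi (hα : 0 < α) (hβ : 0 < β) {f : ℝ → E}
    (hf : Integrable f) : IntegrableOn (fun t => f (β * t - α / t)) (Ioi 0) := by
  have hbdd : ∀ᵐ t ∂volume.restrict (Ioi 0), ‖(β + α / t ^ 2)⁻¹‖ ≤ β⁻¹ := by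
    refine Filter.Eventually.of_forall fun t => ?_
    rw [norm_inv, norm_of_nonneg (by positivity)]
    exact inv_anti₀ hβ (le_add_of_nonneg_right (by positivity))
  refine IntegrableOn.congr_fun ((integrableOn_deriv_smul_comp_mul_sub_div_Ioi hα hβ hf).bdd_smul
    β⁻¹ (Measurable.aestronglyMeasurable (by fun_prop)) hbdd) (fun t _ => ?_) measurableSet_Ioi
  simp only [Pi.smul_apply', smul_smul]
  rw [inv_mul_cancel₀ (by positivity), one_smul]

lemma integral_comp_mul_sub_div_Ioi_eq_integral_div_sq_smul {f : ℝ → E}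
    (heven : ∀ u, f (-u) = f u) (hα : 0 < α) (hβ : 0 < β) :
    ∫ t in Ioi 0, f (β * t - α / t) = ∫ t in Ioi 0, (α / β / t ^ 2) • f (β * t - α / t) := by
  rw [← integral_comp_const_div_Ioi (div_pos hα hβ)]
  refine setIntegral_congr_fun measurableSet_Ioi fun t ht => ?_
  have : β * (α / β / t) - α / (α / β / t) = -(β * t - α / t) := by
    have := ht.out; field_simp; ring
  rw [this, heven]

theorem integral_comp_mul_sub_div_Ioi_s1 {f : ℝ → E} (hf : Integrable f)
    (heven : ∀ u, f (-u) = f u) (hα : 0 < α) (hβ : 0 < β) :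
    ∫ t in Ioi 0, f (β * t - α / t) = (2 * β)⁻¹ • ∫ u, f u := by
  have hint := integrableOn_comp_mul_sub_div_Ioi hα hβ hf
  have hint_mirror : IntegrableOn (fun t => (α / β / t ^ 2) • f (β * t - α / t)) (Ioi 0) := by
    refine IntegrableOn.congr_fun
      (((integrableOn_deriv_smul_comp_mul_sub_div_Ioi hα hβ hf).sub (hint.smul β)).smul β⁻¹)
      (fun t _ => ?_) measurableSet_Ioi
    simp only [Pi.smul_apply, Pi.sub_apply]
    match_scalars
    field_simp
    ring
  have hsplit : ∫ u, f u = β • ((∫ t in Ioi 0, f (β * t - α / t)) +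
      ∫ t in Ioi 0, (α / β / t ^ 2) • f (β * t - α / t)) := by
    rw [integral_eq_integral_Ioi_deriv_smul_comp_mul_sub_div hα hβ,
      ← integral_add hint hint_mirror, ← integral_smul]
    refine setIntegral_congr_fun measurableSet_Ioi fun t _ => ?_
    match_scalars
    field_simp
  rw [hsplit, ← integral_comp_mul_sub_div_Ioi_eq_integral_div_sq_smul heven hα hβ, ← two_smul ℝ,
    smul_smul, smul_smul, show (2 * β)⁻¹ * β * 2 = 1 by field_simp, one_smul]

end CauchySchlomilch

theorem integral_exp_neg_sq_mul_sub_div_Ioi {α β : ℝ} (hα : 0 ≤ α) (hβ : 0 < β) :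
    ∫ t in Ioi 0, exp (-(β * t - α / t) ^ 2) = √π / (2 * β) := by
  rcases hα.eq_or_lt with rfl | hα
  · simp only [zero_div, sub_zero, mul_pow, ← neg_mul]
    rw [integral_gaussian_Ioi, sqrt_div pi_pos.le, sqrt_sq hβ.le, div_div, mul_comm]
  · rw [integral_comp_mul_sub_div_Ioi_s1 (f := fun u => exp (-u ^ 2))
      (by simpa using integrable_exp_neg_mul_sq one_pos) (fun u => by simp) hα hβ]
    simpa [div_eq_inv_mul] using congrArg ((2 * β)⁻¹ * ·) (integral_gaussian 1)

theorem integral_rpow_neg_half_mul_exp_neg_div_sub_mul_Ioi {a b : ℝ} (ha : 0 ≤ a) (hb : 0 < b) :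
    ∫ s in Ioi 0, s ^ (-(1 / 2 : ℝ)) * exp (-(a / s) - b * s)
      = √(π / b) * exp (-(2 * √(a * b))) := by
  rw [← integral_comp_rpow_Ioi_of_pos two_pos]
  have hpoint : ∀ t ∈ Ioi (0 : ℝ),
      (2 * t ^ ((2 : ℝ) - 1)) • ((t ^ (2 : ℝ)) ^ (-(1 / 2 : ℝ)) *
        exp (-(a / t ^ (2 : ℝ)) - b * t ^ (2 : ℝ)))
        = 2 * exp (-(2 * √(a * b))) * exp (-(√b * t - √a / t) ^ 2) := by
    intro t ht
    have ht := ht.out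
    have hinv : (t ^ (2 : ℝ)) ^ (-(1 / 2 : ℝ)) = t⁻¹ := by
      rw [rpow_neg (by positivity), ← sqrt_eq_rpow, rpow_two, sqrt_sq ht.le]
    have hexp : -(a / t ^ 2) - b * t ^ 2 = -(√b * t - √a / t) ^ 2 - 2 * √(a * b) := by
      rw [sqrt_mul ha]
      field_simp
      linear_combination t ^ 4 * sq_sqrt hb.le + sq_sqrt ha
    rw [hinv, rpow_two, hexp, smul_eq_mul, sub_eq_add_neg _ (2 * _), exp_add,
      show (2 : ℝ) - 1 = 1 by norm_num, rpow_one]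
    field_simp
  rw [setIntegral_congr_fun measurableSet_Ioi hpoint, integral_const_mul,
    integral_exp_neg_sq_mul_sub_div_Ioi (sqrt_nonneg a) (sqrt_pos.2 hb), sqrt_div pi_pos.le]
  field_simp

lemma rpow_natCast_div_two {x : ℝ} (hx : 0 ≤ x) (n : ℕ) : x ^ ((n : ℝ) / 2) = √x ^ n := by
  rw [div_eq_inv_mul, rpow_mul hx, rpow_natCast, sqrt_eq_rpow, one_div]

lemma scale_mixture_integrand_eq (p : ℕ) (r lam : ℝ) {s : ℝ} (hs : 0 < s) :
    (2 * π * s) ^ (-(p : ℝ) / 2) * exp (-(r ^ 2) / (2 * s)) *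
        ((lam ^ 2 / 2) ^ (((p : ℝ) + 1) / 2) * s ^ (((p : ℝ) + 1) / 2 - 1) *
          exp (-(lam ^ 2) * s / 2) / Gamma (((p : ℝ) + 1) / 2))
      = (2 * π) ^ (-(p : ℝ) / 2) * (lam ^ 2 / 2) ^ (((p : ℝ) + 1) / 2) /
          Gamma (((p : ℝ) + 1) / 2) *
        (s ^ (-(1 / 2 : ℝ)) * exp (-(r ^ 2 / 2 / s) - lam ^ 2 / 2 * s)) := by
  have hpow : s ^ (-(p : ℝ) / 2) * s ^ (((p : ℝ) + 1) / 2 - 1) = s ^ (-(1 / 2 : ℝ)) := by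
    rw [← rpow_add hs]; ring_nf
  have hexp : exp (-(r ^ 2 / 2 / s) - lam ^ 2 / 2 * s)
      = exp (-(r ^ 2) / (2 * s)) * exp (-(lam ^ 2) * s / 2) := by
    rw [← exp_add]; ring_nf
  rw [mul_rpow (by positivity) hs.le, hexp, ← hpow]
  ring

lemma scale_mixture_constant_eq (p : ℕ) {lam : ℝ} (hlam : 0 < lam) :
    (2 * π) ^ (-(p : ℝ) / 2) * (lam ^ 2 / 2) ^ (((p : ℝ) + 1) / 2) /
        Gamma (((p : ℝ) + 1) / 2) * √(π / (lam ^ 2 / 2))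
      = √π / ((2 * √π) ^ p * Gamma (((p : ℝ) + 1) / 2)) * lam ^ p := by
  have hsqrt : √(lam ^ 2 / 2) = lam / √2 := by rw [sqrt_div (sq_nonneg lam), sqrt_sq hlam.le]
  rw [sqrt_div pi_pos.le, hsqrt, neg_div, rpow_neg (by positivity),
    rpow_natCast_div_two (by positivity),
    show ((p : ℝ) + 1) / 2 = ((p + 1 : ℕ) : ℝ) / 2 by push_cast; ring,
    rpow_natCast_div_two (by positivity), hsqrt, sqrt_mul zero_le_two, mul_pow 2,
    show (2 : ℝ) ^ p = √2 ^ p * √2 ^ p by rw [← mul_pow, mul_self_sqrt zero_le_two], div_pow]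
  field_simp
  ring

/-- The multivariate group-lasso prior is a scale mixture of isotropic Gaussians
with a Gamma((p+1)/2, λ²/2) mixing distribution on the variance. -/
theorem group_lasso_scale_mixture (p : ℕ) :
    ∃ C : ℝ, 0 < C ∧ ∀ lam : ℝ, 0 < lam → ∀ z : EuclideanSpace ℝ (Fin p),
      ∫ s in Set.Ioi (0 : ℝ),
          (2 * Real.pi * s) ^ (-(p : ℝ) / 2) * Real.exp (-(‖z‖ ^ 2) / (2 * s)) *
            ((lam ^ 2 / 2) ^ (((p : ℝ) + 1) / 2) * s ^ (((p : ℝ) + 1) / 2 - 1) *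
              Real.exp (-(lam ^ 2) * s / 2) / Real.Gamma (((p : ℝ) + 1) / 2))
        = C * lam ^ p * Real.exp (-(lam * ‖z‖)) := by
  refine ⟨√π / ((2 * √π) ^ p * Gamma (((p : ℝ) + 1) / 2)), by positivity, fun lam hlam z => ?_⟩
  have hsqrt : √(‖z‖ ^ 2 / 2 * (lam ^ 2 / 2)) = lam * ‖z‖ / 2 := by
    rw [show ‖z‖ ^ 2 / 2 * (lam ^ 2 / 2) = (lam * ‖z‖ / 2) ^ 2 by ring]
    exact sqrt_sq (by positivity)
  rw [setIntegral_congr_fun measurableSet_Ioi fun s hs => scale_mixture_integrand_eq p ‖z‖ lam hs,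
    integral_const_mul,
    integral_rpow_neg_half_mul_exp_neg_div_sub_mul_Ioi (by positivity) (by positivity), hsqrt,
    ← mul_assoc, scale_mixture_constant_eq p hlam]
  ring_nf
end

section
/- Under the change of variables (ω₁₂, ω₂₂) → (ω₁₂, θ) with θ = ω₂₂ − ω₂₁ Ω₁₁^{−1} ω₁₂ and Ω₁₁ held fixed, the Jacobian determinant of the transformation is 1, and the Gaussian-likelihood-plus-exponential-prior kernel θ^{n/2} exp(−((s₂₂+λ₀)/2)(θ + ω₂₁Ω₁₁^{−1}ω₁₂) − s₁₂ᵀω₁₂ − (1/2)ω₁₂ᵀ T ω₁₂) factorizes as a product of a function of θ alone (a Gamma(n/2 + 1, (s₂₂+λ₀)/2) kernel) and a function of ω₁₂ alone (a Gaussian kernel with precision A = T + (λ₀+s₂₂)Ω₁₁^{−1} and mean −A^{−1}s₁₂). -/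
/-!
The map `(ω₁₂, ω₂₂) ↦ (ω₁₂, θ)` subtracts from the second coordinate a function of the first,
so its derivative is the identity on the invariant subspace `0 × ℝ` and on the quotient by it;
hence its determinant is `1`. The factorization is completing the square in `ω₁₂`: the
`ω₁₂`-terms of the exponent form the quadratic `-½ ωᵀAω - s₁₂ᵀω` with `A` positive definite.
-/

open Matrix

theorem LinearMap.det_eq_one_of_forall_mem_of_forall_sub_mem {K V : Type*} [Field K]
    [AddCommGroup V] [Module K V] [FiniteDimensional K V] (e : V →ₗ[K] V) (W : Submodule K V)
    (hW : ∀ w ∈ W, e w = w) (hQ : ∀ v, e v - v ∈ W) : e.det = 1 := by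
  have he : W ≤ W.comap e := fun w hw => by simpa [hW w hw] using hw
  have hres : e.restrict he = LinearMap.id := LinearMap.ext fun w => Subtype.ext (hW w w.2)
  have hquot : W.mapQ W e he = LinearMap.id := by
    ext v
    simpa [Submodule.Quotient.eq] using hQ v
  rw [e.det_eq_det_mul_det W he, hres, hquot]
  simp

theorem LinearMap.det_prod_fst_snd_sub_comp_fst {K E F : Type*} [Field K]
    [AddCommGroup E] [Module K E] [FiniteDimensional K E]
    [AddCommGroup F] [Module K F] [FiniteDimensional K F] (L : E →ₗ[K] F) :
    ((LinearMap.fst K E F).prod (LinearMap.snd K E F - L ∘ₗ LinearMap.fst K E F)).det = 1 :=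
  det_eq_one_of_forall_mem_of_forall_sub_mem _ (LinearMap.ker (LinearMap.fst K E F))
    (fun w hw => by simp_all [Prod.ext_iff]) (fun v => by simp)

theorem det_fderiv_prod_fst_snd_sub_comp_fst {𝕜 E F : Type*} [NontriviallyNormedField 𝕜]
    [NormedAddCommGroup E] [NormedSpace 𝕜 E] [FiniteDimensional 𝕜 E]
    [NormedAddCommGroup F] [NormedSpace 𝕜 F] [FiniteDimensional 𝕜 F]
    {f : E → F} {x : E × F} (hf : DifferentiableAt 𝕜 f x.1) :
    (fderiv 𝕜 (fun x : E × F => (x.1, x.2 - f x.1)) x).det = 1 := by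
  have hF : HasFDerivAt (fun x : E × F => (x.1, x.2 - f x.1))
      ((ContinuousLinearMap.fst 𝕜 E F).prod
        (ContinuousLinearMap.snd 𝕜 E F - fderiv 𝕜 f x.1 ∘L ContinuousLinearMap.fst 𝕜 E F)) x :=
    hasFDerivAt_fst.prodMk (hasFDerivAt_snd.sub (hf.hasFDerivAt.comp x hasFDerivAt_fst))
  rw [hF.fderiv]
  exact LinearMap.det_prod_fst_snd_sub_comp_fst (fderiv 𝕜 f x.1 : E →ₗ[𝕜] F)

theorem Matrix.IsSymm.dotProduct_mulVec_add_inv_mulVec {n R : Type*} [Fintype n] [DecidableEq n]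
    [CommRing R] {A : Matrix n n R} (hA : A.IsSymm) (hdet : IsUnit A.det) (b ω : n → R) :
    (ω + A⁻¹ *ᵥ b) ⬝ᵥ (A *ᵥ (ω + A⁻¹ *ᵥ b))
      = ω ⬝ᵥ (A *ᵥ ω) + 2 * (b ⬝ᵥ ω) + b ⬝ᵥ (A⁻¹ *ᵥ b) := by
  have hb : A *ᵥ (A⁻¹ *ᵥ b) = b := by rw [mulVec_mulVec, mul_nonsing_inv A hdet, one_mulVec]
  have hswap : ∀ x y : n → R, x ⬝ᵥ (A *ᵥ y) = (A *ᵥ x) ⬝ᵥ y := fun x y => by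
    rw [dotProduct_mulVec, ← mulVec_transpose, hA.eq]
  rw [mulVec_add, dotProduct_add, add_dotProduct, add_dotProduct, hb, hswap (A⁻¹ *ᵥ b), hb,
    dotProduct_comm ω b, dotProduct_comm (A⁻¹ *ᵥ b) b]
  ring

theorem block_gibbs_factorization_general {p : ℕ}
    (Ω₁₁ : Matrix (Fin p) (Fin p) ℝ) (hΩ₁₁ : Ω₁₁.PosDef)
    (T : Matrix (Fin p) (Fin p) ℝ) (hT : T.PosSemidef)
    (n s₂₂ lam₀ : ℝ) (hs : 0 < s₂₂ + lam₀)
    (s₁₂ : Fin p → ℝ)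
    (F : (Fin p → ℝ) × ℝ → (Fin p → ℝ) × ℝ)
    (hF : ∀ x, F x = (x.1, x.2 - x.1 ⬝ᵥ (Ω₁₁⁻¹ *ᵥ x.1)))
    (A : Matrix (Fin p) (Fin p) ℝ) (hA : A = T + (lam₀ + s₂₂) • Ω₁₁⁻¹) :
    (∀ x, (fderiv ℝ F x).det = 1)
    ∧ (∀ θ : ℝ, 0 < θ → ∀ ω : Fin p → ℝ,
        θ ^ (n / 2) *
          Real.exp (-((s₂₂ + lam₀) / 2) * (θ + ω ⬝ᵥ (Ω₁₁⁻¹ *ᵥ ω))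
            - s₁₂ ⬝ᵥ ω - (1 / 2) * (ω ⬝ᵥ (T *ᵥ ω)))
        = (θ ^ (n / 2) * Real.exp (-((s₂₂ + lam₀) / 2) * θ))
          * (Real.exp (-(1 / 2) *
                ((ω + A⁻¹ *ᵥ s₁₂) ⬝ᵥ (A *ᵥ (ω + A⁻¹ *ᵥ s₁₂))))
              * Real.exp ((1 / 2) * (s₁₂ ⬝ᵥ (A⁻¹ *ᵥ s₁₂))))) := by
  refine ⟨fun x => ?_, fun θ _ ω => ?_⟩
  · have hquad : Differentiable ℝ fun v : Fin p → ℝ => v ⬝ᵥ (Ω₁₁⁻¹ *ᵥ v) := by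
      simp only [dotProduct, mulVec]
      fun_prop
    rw [funext hF]
    exact det_fderiv_prod_fst_snd_sub_comp_fst (hquad x.1)
  · have hApos : A.PosDef := hA ▸ PosDef.posSemidef_add hT (hΩ₁₁.inv.smul (by linarith))
    have hAsymm : A.IsSymm := isHermitian_iff_isSymm.mp hApos.isHermitian
    rw [hAsymm.dotProduct_mulVec_add_inv_mulVec hApos.det_pos.ne'.isUnit, mul_assoc,
      ← Real.exp_add, ← Real.exp_add]
    subst hA
    rw [add_mulVec, dotProduct_add, smul_mulVec, dotProduct_smul, smul_eq_mul]
    congr 2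
    ring

/-- The change of variables `(ω₁₂, ω₂₂) ↦ (ω₁₂, θ)` with
`θ = ω₂₂ - ω₁₂ᵀ Ω₁₁⁻¹ ω₁₂` has unit Jacobian determinant, and the
likelihood-times-prior kernel factorizes into a Gamma(n/2 + 1, (s₂₂+λ₀)/2)
kernel in `θ` and a Gaussian kernel in `ω₁₂` with precision
`A = T + (λ₀+s₂₂) Ω₁₁⁻¹` and mean `-A⁻¹ s₁₂`. -/
theorem block_gibbs_factorization {p : ℕ}
    (Ω₁₁ : Matrix (Fin p) (Fin p) ℝ) (hΩ₁₁ : Ω₁₁.PosDef)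
    (T : Matrix (Fin p) (Fin p) ℝ) (hT : T.PosSemidef)
    (n s₂₂ lam₀ : ℝ) (hn : 0 < n) (hs : 0 < s₂₂ + lam₀)
    (s₁₂ : Fin p → ℝ)
    (F : (Fin p → ℝ) × ℝ → (Fin p → ℝ) × ℝ)
    (hF : ∀ x, F x = (x.1, x.2 - x.1 ⬝ᵥ (Ω₁₁⁻¹ *ᵥ x.1)))
    (A : Matrix (Fin p) (Fin p) ℝ) (hA : A = T + (lam₀ + s₂₂) • Ω₁₁⁻¹) :
    (∀ x, (fderiv ℝ F x).det = 1)
    ∧ (∀ θ : ℝ, 0 < θ → ∀ ω : Fin p → ℝ,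
        θ ^ (n / 2) *
          Real.exp (-((s₂₂ + lam₀) / 2) * (θ + ω ⬝ᵥ (Ω₁₁⁻¹ *ᵥ ω))
            - s₁₂ ⬝ᵥ ω - (1 / 2) * (ω ⬝ᵥ (T *ᵥ ω)))
        = (θ ^ (n / 2) * Real.exp (-((s₂₂ + lam₀) / 2) * θ))
          * (Real.exp (-(1 / 2) *
                ((ω + A⁻¹ *ᵥ s₁₂) ⬝ᵥ (A *ᵥ (ω + A⁻¹ *ᵥ s₁₂))))
              * Real.exp ((1 / 2) * (s₁₂ ⬝ᵥ (A⁻¹ *ᵥ s₁₂))))) :=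
  block_gibbs_factorization_general Ω₁₁ hΩ₁₁ T hT n s₂₂ lam₀ hs s₁₂ F hF A hA
end
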